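/- arXiv:2012.09633 — 4 statements merged into one kernel-verified Lean document; each statement's English description precedes it below -/
import Mathlib

section
/- Let n, m be positive integers and let x_1, …, x_m ∈ ℂ^n be real vectors. Let λ_1, …, λ_m ∈ ℂ be distinct and nonzero, let θ_1, …, θ_m ∈ ℂ^n be linearly independent over ℂ, and let a_1, …, a_m ∈ ℂ satisfy the reconstruction property x_k = Σ_{j=1}^m λ_j^k · a_j · θ_j for all k = 1, …, m. Assume there is an involution σ of {1, …, m} such that λ_{σ(j)} = conj(λ_j) for every j, that for every j with λ_j non-real there exists c_j ∈ ℂ with θ_{σ(j)} = c_j · conj(θ_j), and that for every j with λ_j real the vector θ_j is real. Then the scaled DMD modes occur in complex conjugate pairs: for every j with λ_j non-real, a_{σ(j)} · θ_{σ(j)} = conj(a_j · θ_j). -/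
/-- For real-valued snapshots satisfying the DMD reconstruction property,
with eigenvalues occurring in complex conjugate pairs via an involution `σ` and the
modes of non-real eigenvalues related by scalar multiples of entrywise conjugates,
the scaled DMD modes occur in complex conjugate pairs. -/
theorem stmt_1 (n m : ℕ) (hn : 0 < n) (hm : 0 < m)
    (x : Fin m → Fin n → ℂ) (hxreal : ∀ k i, (x k i).im = 0)
    (lam : Fin m → ℂ) (hdist : Function.Injective lam) (hnz : ∀ j, lam j ≠ 0)
    (θ : Fin m → Fin n → ℂ) (hli : LinearIndependent ℂ θ)
    (a : Fin m → ℂ)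
    (hrec : ∀ k : Fin m, x k = ∑ j, lam j ^ ((k : ℕ) + 1) • (a j • θ j))
    (σ : Fin m → Fin m) (hσ : Function.Involutive σ)
    (hσlam : ∀ j, lam (σ j) = (starRingEnd ℂ) (lam j))
    (hσθ : ∀ j, (lam j).im ≠ 0 →
      ∃ c : ℂ, θ (σ j) = c • fun i => (starRingEnd ℂ) (θ j i))
    (hθreal : ∀ j, (lam j).im = 0 → ∀ i, (θ j i).im = 0) :
    ∀ j, (lam j).im ≠ 0 →
      a (σ j) • θ (σ j) = fun i => (starRingEnd ℂ) (a j * θ j i) := by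
  -- The permutation induced by σ
  have e : Equiv.Perm (Fin m) := hσ.toPerm σ
  intro j hj
  funext i
  show a (σ j) * θ (σ j) i = (starRingEnd ℂ) (a j * θ j i)
  -- coefficient vector
  set c : Fin m → ℂ :=
    fun l => a l * θ l i - (starRingEnd ℂ) (a (σ l) * θ (σ l) i) with hc
  have h1 : ∀ k : Fin m, x k i = ∑ l, lam l ^ ((k : ℕ) + 1) * (a l * θ l i) := by
    intro k
    have := congrFun (hrec k) i
    simpa [Finset.sum_apply, smul_eq_mul, mul_assoc] using this
  have h2 : ∀ k : Fin m,
      x k i = ∑ l, lam l ^ ((k : ℕ) + 1) *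
        (starRingEnd ℂ) (a (σ l) * θ (σ l) i) := by
    intro k
    have hcx : (starRingEnd ℂ) (x k i) = x k i :=
      Complex.conj_eq_iff_im.mpr (hxreal k i)
    calc x k i = (starRingEnd ℂ) (x k i) := hcx.symm
      _ = ∑ l, (starRingEnd ℂ) (lam l) ^ ((k : ℕ) + 1) *
            (starRingEnd ℂ) (a l * θ l i) := by
          rw [h1 k, map_sum]
          simp [map_mul, map_pow]
      _ = ∑ l, lam (σ l) ^ ((k : ℕ) + 1) * (starRingEnd ℂ) (a l * θ l i) := by
          simp [hσlam]
      _ = ∑ l, lam (σ (σ l)) ^ ((k : ℕ) + 1) *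
            (starRingEnd ℂ) (a (σ l) * θ (σ l) i) :=
          (Equiv.sum_comp (hσ.toPerm σ)
            (fun l => lam (σ l) ^ ((k : ℕ) + 1) *
              (starRingEnd ℂ) (a l * θ l i))).symm
      _ = ∑ l, lam l ^ ((k : ℕ) + 1) *
            (starRingEnd ℂ) (a (σ l) * θ (σ l) i) := by
          simp [hσ _]
  -- The Vandermonde system
  set M : Matrix (Fin m) (Fin m) ℂ :=
    fun k l => lam l ^ ((k : ℕ) + 1) with hM
  have hMv : M.mulVec c = 0 := by
    funext k
    simp only [Matrix.mulVec, dotProduct, hM, hc, Pi.zero_apply, mul_sub,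
      Finset.sum_sub_distrib]
    rw [← h1 k, ← h2 k, sub_self]
  have hMfac : M = (Matrix.vandermonde lam).transpose * Matrix.diagonal lam := by
    funext k l
    simp [hM, Matrix.mul_apply, Matrix.diagonal, Finset.sum_ite_eq,
      Matrix.vandermonde, pow_succ]
  have hdet : M.det ≠ 0 := by
    rw [hMfac, Matrix.det_mul, Matrix.det_transpose, Matrix.det_vandermonde,
      Matrix.det_diagonal]
    refine mul_ne_zero (Finset.prod_ne_zero_iff.mpr fun p _ => ?_)
      (Finset.prod_ne_zero_iff.mpr fun l _ => hnz l)
    exact Finset.prod_ne_zero_iff.mpr fun q hq => sub_ne_zero_of_ne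
      fun h => absurd (hdist h) (Finset.mem_Ioi.mp hq).ne'
  have hc0 : c = 0 := Matrix.eq_zero_of_mulVec_eq_zero hdet hMv
  have hcj : a j * θ j i = (starRingEnd ℂ) (a (σ j) * θ (σ j) i) := by
    have := congrFun hc0 j
    simpa [hc, sub_eq_zero] using this
  have := congrArg (starRingEnd ℂ) hcj
  simpa using this.symm
end

section
/- Let n be a positive integer, let z_1, …, z_k ∈ ℂ^n, and let w_1, …, w_p ∈ ℂ^n be real vectors, such that the 2k + p vectors Re(z_1), Im(z_1), …, Re(z_k), Im(z_k), w_1, …, w_p are linearly independent over ℝ (viewing Re(z_l), Im(z_l) ∈ ℝ^n). Let β_1, …, β_k ∈ ℂ and γ_1, …, γ_p ∈ ℂ. If the vector Σ_{l=1}^k z_l + Σ_{l=1}^k β_l · conj(z_l) + Σ_{j=1}^p γ_j · w_j is real, then β_l = 1 for all l = 1, …, k and γ_j ∈ ℝ for all j = 1, …, p. -/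
/-- If the real and imaginary parts of `z_1, …, z_k` together with the real
vectors `w_1, …, w_p` are linearly independent over `ℝ`, and
`Σ z_l + Σ β_l conj(z_l) + Σ γ_j w_j` is real, then all `β_l = 1` and all `γ_j` are real. -/
theorem stmt_2 (n k p : ℕ) (hn : 0 < n)
    (z : Fin k → Fin n → ℂ) (w : Fin p → Fin n → ℂ)
    (hwreal : ∀ j i, (w j i).im = 0)
    (hli : LinearIndependent ℝ
      (Sum.elim (Sum.elim (fun l i => (z l i).re) (fun l i => (z l i).im))
        (fun j i => (w j i).re) : (Fin k ⊕ Fin k) ⊕ Fin p → Fin n → ℝ))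
    (β : Fin k → ℂ) (γ : Fin p → ℂ)
    (hreal : ∀ i,
      (∑ l, z l i + ∑ l, β l * (starRingEnd ℂ) (z l i) + ∑ j, γ j * w j i).im = 0) :
    (∀ l, β l = 1) ∧ (∀ j, (γ j).im = 0) := by
  set c : (Fin k ⊕ Fin k) ⊕ Fin p → ℝ :=
    Sum.elim (Sum.elim (fun l => (β l).im) (fun l => 1 - (β l).re)) (fun j => (γ j).im) with hc
  have key : ∑ x, c x • (Sum.elim (Sum.elim (fun l i => (z l i).re) (fun l i => (z l i).im))
        (fun j i => (w j i).re) : (Fin k ⊕ Fin k) ⊕ Fin p → Fin n → ℝ) x = 0 := by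
    funext i
    have h := hreal i
    simp only [Complex.add_im, Complex.im_sum, Complex.mul_im, Complex.conj_re,
      Complex.conj_im, hwreal, mul_zero, add_zero, zero_add] at h
    simp only [Fintype.sum_sum_type, hc, Sum.elim_inl, Sum.elim_inr, Finset.sum_apply,
      Pi.smul_apply, smul_eq_mul, Pi.zero_apply, Pi.add_apply]
    simp only [sub_mul, one_mul, neg_mul, mul_neg, Finset.sum_sub_distrib, Finset.sum_add_distrib,
      Finset.sum_neg_distrib] at h ⊢
    linarith
  have hz := Fintype.linearIndependent_iff.mp hli c key
  constructor
  · intro l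
    have h1 := hz (Sum.inl (Sum.inl l))
    have h2 := hz (Sum.inl (Sum.inr l))
    simp [hc] at h1 h2
    apply Complex.ext <;> simp [h1]; linarith
  · intro j
    have := hz (Sum.inr j)
    simpa [hc] using this
end

section
/- Let n, m, r be positive integers, let Y ∈ ℂ^{n×m}, U ∈ ℂ^{n×r}, V ∈ ℂ^{m×r}, and let Σ ∈ ℂ^{r×r} be invertible. Define S = U* Y V Σ^{-1} ∈ ℂ^{r×r} and A = Y V Σ^{-1} U* ∈ ℂ^{n×n}, where U* denotes the conjugate transpose of U. Suppose v ∈ ℂ^r is nonzero, λ ∈ ℂ is nonzero, and S v = λ v. Then the vector θ := (1/λ) · Y V Σ^{-1} v ∈ ℂ^n is nonzero and satisfies A θ = λ θ; that is, θ is an eigenvector of A with eigenvalue λ. -/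
/-- If `S = U* Y V Σ⁻¹`, `A = Y V Σ⁻¹ U*`, and `v` is an eigenvector of `S`
for a nonzero eigenvalue `λ`, then `θ = (1/λ) Y V Σ⁻¹ v` is nonzero and is an eigenvector
of `A` with eigenvalue `λ`. -/
theorem stmt_6 (n m r : ℕ) (hn : 0 < n) (hm : 0 < m) (hr : 0 < r)
    (Y : Matrix (Fin n) (Fin m) ℂ) (U : Matrix (Fin n) (Fin r) ℂ)
    (V : Matrix (Fin m) (Fin r) ℂ) (D : Matrix (Fin r) (Fin r) ℂ)
    (hD : IsUnit D.det)
    (S : Matrix (Fin r) (Fin r) ℂ) (hS : S = U.conjTranspose * Y * V * D⁻¹)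
    (A : Matrix (Fin n) (Fin n) ℂ) (hA : A = Y * V * D⁻¹ * U.conjTranspose)
    (v : Fin r → ℂ) (hv : v ≠ 0) (μ : ℂ) (hμ : μ ≠ 0)
    (heig : S.mulVec v = μ • v)
    (θ : Fin n → ℂ) (hθ : θ = μ⁻¹ • (Y * V * D⁻¹).mulVec v) :
    θ ≠ 0 ∧ A.mulVec θ = μ • θ := by
  set w : Fin n → ℂ := (Y * V * D⁻¹).mulVec v with hw
  have hUw : U.conjTranspose.mulVec w = μ • v := by
    rw [hS] at heig
    simpa [hw, Matrix.mulVec_mulVec, Matrix.mul_assoc] using heig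
  have hwne : w ≠ 0 := by
    intro h
    apply hv
    have : U.conjTranspose.mulVec w = 0 := by simp [h]
    rw [hUw] at this
    exact (smul_eq_zero.mp this).resolve_left hμ
  refine ⟨?_, ?_⟩
  · rw [hθ]
    simp [smul_eq_zero, hμ, hwne]
  · rw [hθ, hA, Matrix.mulVec_smul, ← Matrix.mulVec_mulVec, hUw]
    rw [Matrix.mulVec_smul, smul_smul, smul_smul, inv_mul_cancel₀ hμ, mul_inv_cancel₀ hμ,
      one_smul]
end

section
/- Let n, m be positive integers with 2m ≤ n, and let x_0, x_1, …, x_m ∈ ℂ^n be such that both x_0, …, x_{m−1} and x_1, …, x_m are linearly independent over ℂ. Let A : ℂ^n → ℂ^n be the linear map determined by A x_j = x_{j+1} for j = 0, …, m−1 and A u = 0 for every u orthogonal (with respect to the standard Hermitian inner product) to span(x_0, …, x_{m−1}). Suppose A has m distinct nonzero eigenvalues λ_1, …, λ_m with corresponding eigenvectors θ_1, …, θ_m. Then there exist unique a_1, …, a_m ∈ ℂ such that x_k = Σ_{j=1}^m λ_j^k · a_j · θ_j for all k = 1, …, m. -/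
/-!
`A` vanishes on the common kernel of the `m` linear forms `u ↦ ⟪x j, u⟫` (`j < m`), so its range
has dimension at most `m`. The eigenvectors `θ j = (λ j)⁻¹ • A (θ j)` are `m` linearly independent
vectors of that range, hence span it, and `A` maps their span onto itself. So `A (x 0) = A w` for
some `w = ∑ j, a j • θ j`, and then
`x (k + 1) = A ^ (k + 1) (x 0) = A ^ (k + 1) w = ∑ j, λ j ^ (k + 1) • a j • θ j`.
Uniqueness of the `a j` is linear independence of the `θ j`.
-/

open Module Submodule

theorem LinearMap.finrank_range_le_of_ker_le {K V W W' : Type*} [DivisionRing K]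
    [AddCommGroup V] [Module K V] [AddCommGroup W] [Module K W] [AddCommGroup W'] [Module K W']
    [FiniteDimensional K V] {f : V →ₗ[K] W} {g : V →ₗ[K] W'} (h : ker g ≤ ker f) :
    finrank K (range f) ≤ finrank K (range g) := by
  have := finrank_range_add_finrank_ker f
  have := finrank_range_add_finrank_ker g
  have := Submodule.finrank_mono h
  omega

theorem LinearIndependent.eq_of_sum_smul_smul_eq {R M ι : Type*} [Ring R] [IsDomain R]
    [AddCommGroup M] [Module R M] [Fintype ι] {θ : ι → M} (hθ : LinearIndependent R θ)
    {μ : ι → R} (hμ : ∀ i, μ i ≠ 0) {a b : ι → R}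
    (h : ∑ i, μ i • a i • θ i = ∑ i, μ i • b i • θ i) : a = b := by
  simp only [smul_smul] at h
  exact funext fun i => mul_left_cancel₀ (hμ i) (hθ.eq_coords_of_eq h i)

namespace Module.End

theorem pow_apply_of_apply_eq_smul {R M : Type*} [Semiring R] [AddCommMonoid M] [Module R M]
    {f : End R M} {μ : R} {v : M} (h : f v = μ • v) (k : ℕ) : (f ^ k) v = μ ^ k • v := by
  induction k with
  | zero => simp
  | succ k ih => rw [pow_succ', mul_apply, ih, map_smul, h, smul_smul, pow_succ]

theorem pow_apply_sum_smul {R M ι : Type*} [CommSemiring R] [AddCommMonoid M] [Module R M]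
    [Fintype ι] {f : End R M} {μ : ι → R} {θ : ι → M} (h : ∀ i, f (θ i) = μ i • θ i)
    (a : ι → R) (k : ℕ) :
    (f ^ k) (∑ i, a i • θ i) = ∑ i, μ i ^ k • a i • θ i := by
  simp only [map_sum, map_smul, pow_apply_of_apply_eq_smul (h _), smul_comm (a _)]

theorem span_range_le_map_of_apply_eq_smul {K V ι : Type*} [DivisionRing K] [AddCommGroup V]
    [Module K V] {f : End K V} {μ : ι → K} {θ : ι → V} (hμ : ∀ i, μ i ≠ 0)
    (h : ∀ i, f (θ i) = μ i • θ i) :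
    span K (Set.range θ) ≤ (span K (Set.range θ)).map f := by
  refine span_le.2 ?_
  rintro _ ⟨i, rfl⟩
  refine ⟨(μ i)⁻¹ • θ i, smul_mem _ _ (subset_span ⟨i, rfl⟩), ?_⟩
  rw [map_smul, h, smul_smul, inv_mul_cancel₀ (hμ i), one_smul]

theorem eq_pow_apply_zero_of_apply_castSucc_eq_succ {R M : Type*} [Semiring R]
    [AddCommMonoid M] [Module R M] {m : ℕ} {f : End R M} {x : Fin (m + 1) → M}
    (h : ∀ j : Fin m, f (x j.castSucc) = x j.succ) (k : Fin (m + 1)) :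
    x k = (f ^ (k : ℕ)) (x 0) := by
  induction k using Fin.induction with
  | zero => simp
  | succ j ih => rw [← h, ih, Fin.val_succ, pow_succ', mul_apply, Fin.val_castSucc]

end Module.End

theorem stmt_11_general (n m : ℕ)
    (x : Fin (m + 1) → Fin n → ℂ)
    (A : (Fin n → ℂ) →ₗ[ℂ] (Fin n → ℂ))
    (hA1 : ∀ j : Fin m, A (x j.castSucc) = x j.succ)
    (hA2 : ∀ u : Fin n → ℂ,
      (∀ j : Fin m, ∑ i, (starRingEnd ℂ) (x j.castSucc i) * u i = 0) → A u = 0)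
    (lam : Fin m → ℂ) (hdist : Function.Injective lam) (hnz : ∀ j, lam j ≠ 0)
    (θ : Fin m → Fin n → ℂ) (hθnz : ∀ j, θ j ≠ 0)
    (heig : ∀ j, A (θ j) = lam j • θ j) :
    ∃! a : Fin m → ℂ,
      ∀ k : Fin m, x k.succ = ∑ j, lam j ^ ((k : ℕ) + 1) • (a j • θ j) := by
  have hθ : LinearIndependent ℂ θ := End.eigenvectors_linearIndependent' A lam hdist θ
    fun j => End.hasEigenvector_iff.2 ⟨End.mem_eigenspace_iff.2 (heig j), hθnz j⟩
  have hrank : finrank ℂ (LinearMap.range A) ≤ m := by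
    let C := Matrix.mulVecLin (Matrix.of fun j i => starRingEnd ℂ (x (Fin.castSucc j) i))
    calc finrank ℂ (LinearMap.range A) ≤ finrank ℂ (LinearMap.range C) :=
          LinearMap.finrank_range_le_of_ker_le fun u hu => hA2 u fun j => congrFun hu j
      _ ≤ m := (Submodule.finrank_le _).trans (by simp)
  have hspan : span ℂ (Set.range θ) = LinearMap.range A :=
    eq_of_le_of_finrank_le
      ((End.span_range_le_map_of_apply_eq_smul hnz heig).trans LinearMap.map_le_range)
      (by rwa [finrank_span_eq_card hθ, Fintype.card_fin])
  obtain ⟨w, hw, hAw⟩ := End.span_range_le_map_of_apply_eq_smul hnz heig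
    (hspan ▸ LinearMap.mem_range_self A (x 0))
  obtain ⟨a, rfl⟩ := (mem_span_range_iff_exists_fun ℂ).1 hw
  have hx : ∀ k : Fin m, x k.succ = ∑ j, lam j ^ ((k : ℕ) + 1) • (a j • θ j) := fun k => by
    rw [End.eq_pow_apply_zero_of_apply_castSucc_eq_succ hA1, Fin.val_succ, pow_succ,
      End.mul_apply, ← hAw, ← End.mul_apply, ← pow_succ, End.pow_apply_sum_smul heig]
  refine ⟨a, hx, fun b hb => funext fun j => ?_⟩
  exact congrFun (hθ.eq_of_sum_smul_smul_eq (fun i => pow_ne_zero _ (hnz i))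
    ((hb j).symm.trans (hx j))) j

/-- For snapshots `x_0, …, x_m` (with `2m ≤ n`, and both `x_0, …, x_{m-1}`
and `x_1, …, x_m` linearly independent), let `A` be the linear map with `A x_j = x_{j+1}`
for `j < m` and `A u = 0` for every `u` orthogonal to `span(x_0, …, x_{m-1})`.
If `A` has `m` distinct nonzero eigenvalues `λ_j` with eigenvectors `θ_j`, then there are
unique amplitudes `a_j` with `x_k = Σ_j λ_j^k a_j θ_j` for `k = 1, …, m`. -/
theorem stmt_11 (n m : ℕ) (hn : 0 < n) (hm : 0 < m) (hmn : 2 * m ≤ n)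
    (x : Fin (m + 1) → Fin n → ℂ)
    (hli1 : LinearIndependent ℂ (fun j : Fin m => x j.castSucc))
    (hli2 : LinearIndependent ℂ (fun j : Fin m => x j.succ))
    (A : (Fin n → ℂ) →ₗ[ℂ] (Fin n → ℂ))
    (hA1 : ∀ j : Fin m, A (x j.castSucc) = x j.succ)
    (hA2 : ∀ u : Fin n → ℂ,
      (∀ j : Fin m, ∑ i, (starRingEnd ℂ) (x j.castSucc i) * u i = 0) → A u = 0)
    (lam : Fin m → ℂ) (hdist : Function.Injective lam) (hnz : ∀ j, lam j ≠ 0)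
    (θ : Fin m → Fin n → ℂ) (hθnz : ∀ j, θ j ≠ 0)
    (heig : ∀ j, A (θ j) = lam j • θ j) :
    ∃! a : Fin m → ℂ,
      ∀ k : Fin m, x k.succ = ∑ j, lam j ^ ((k : ℕ) + 1) • (a j • θ j) :=
  stmt_11_general n m x A hA1 hA2 lam hdist hnz θ hθnz heig
end
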